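/- arXiv:1806.06329 — 5 statements merged into one kernel-verified Lean document; each statement's English description precedes it below -/
import Mathlib

section
/- Let Q ∈ ℝ, Q ≠ 0, a > 0, and b = Q²+a²-1. If 0 < a < 1, then (a(b-√(b²+4Q²))² + 4aQ²) / ((b-√(b²+4Q²)-2Q²)² + 4a²Q²) < 1. -/
/-!
Write `d = b - √(b² + 4Q²)`, the negative root of `x² = 2bx + 4Q²`. Eliminating `d²` with this
relation, the denominator minus the numerator factors as `(Q² + (1 - a)²)(4Q² - 2(1 + a)d)`, and
both factors are positive because `Q ≠ 0`, `d < 0` and `a > -1`.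
-/

open Real

lemma sub_sqrt_sq_add_neg {b c : ℝ} (hc : 0 < c) : b - √(b ^ 2 + c) < 0 := by
  have : |b| < √(b ^ 2 + c) := by
    rw [← sqrt_sq_eq_abs]
    exact sqrt_lt_sqrt (sq_nonneg b) (by linarith)
  linarith [le_abs_self b]

lemma sub_sqrt_sq_add_sq {b c : ℝ} (hc : 0 ≤ c) :
    (b - √(b ^ 2 + c)) ^ 2 = 2 * b * (b - √(b ^ 2 + c)) + c := by
  have hs : √(b ^ 2 + c) ^ 2 = b ^ 2 + c := sq_sqrt (by positivity)
  linear_combination hs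

lemma den_sub_num_eq {Q a d : ℝ} (hd : d ^ 2 = 2 * (Q ^ 2 + a ^ 2 - 1) * d + 4 * Q ^ 2) :
    ((d - 2 * Q ^ 2) ^ 2 + 4 * a ^ 2 * Q ^ 2) - (a * d ^ 2 + 4 * a * Q ^ 2) =
      (Q ^ 2 + (1 - a) ^ 2) * (4 * Q ^ 2 - 2 * (1 + a) * d) := by
  linear_combination (1 - a) * hd

lemma num_lt_den {Q a d : ℝ} (hQ : Q ≠ 0) (ha : -1 < a) (hd₀ : d < 0)
    (hd : d ^ 2 = 2 * (Q ^ 2 + a ^ 2 - 1) * d + 4 * Q ^ 2) :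
    a * d ^ 2 + 4 * a * Q ^ 2 < (d - 2 * Q ^ 2) ^ 2 + 4 * a ^ 2 * Q ^ 2 := by
  have hQ2 : 0 < Q ^ 2 := by positivity
  have hpos : 0 < (Q ^ 2 + (1 - a) ^ 2) * (4 * Q ^ 2 - 2 * (1 + a) * d) := by
    apply mul_pos (by positivity)
    nlinarith
  linarith [den_sub_num_eq hd]

theorem lemma_ineq_one_general (Q a : ℝ) (hQ : Q ≠ 0) (ha : 0 < a) :
    let b := Q ^ 2 + a ^ 2 - 1
    (a * (b - Real.sqrt (b ^ 2 + 4 * Q ^ 2)) ^ 2 + 4 * a * Q ^ 2) /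
      ((b - Real.sqrt (b ^ 2 + 4 * Q ^ 2) - 2 * Q ^ 2) ^ 2 + 4 * a ^ 2 * Q ^ 2) < 1 := by
  intro b
  have hQ2 : 0 < 4 * Q ^ 2 := by positivity
  have hd₀ := sub_sqrt_sq_add_neg (b := b) hQ2
  have hden : 0 < (b - √(b ^ 2 + 4 * Q ^ 2) - 2 * Q ^ 2) ^ 2 + 4 * a ^ 2 * Q ^ 2 := by
    have : b - √(b ^ 2 + 4 * Q ^ 2) - 2 * Q ^ 2 ≠ 0 := by linarith
    positivity
  rw [div_lt_one hden]
  exact num_lt_den hQ (by linarith) hd₀ (sub_sqrt_sq_add_sq hQ2.le)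

theorem lemma_ineq_one (Q a : ℝ) (hQ : Q ≠ 0) (ha : 0 < a) (ha1 : a < 1) :
    let b := Q ^ 2 + a ^ 2 - 1
    (a * (b - Real.sqrt (b ^ 2 + 4 * Q ^ 2)) ^ 2 + 4 * a * Q ^ 2) /
      ((b - Real.sqrt (b ^ 2 + 4 * Q ^ 2) - 2 * Q ^ 2) ^ 2 + 4 * a ^ 2 * Q ^ 2) < 1 :=
  lemma_ineq_one_general Q a hQ ha
end

section
/- Let Q ∈ ℝ, Q ≠ 0, a > 0, and b = Q²+a²-1. If a > 1, then (a(b+√(b²+4Q²))² + 4aQ²) / ((b+√(b²+4Q²)-2Q²)² + 4a²Q²) > 1. -/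
theorem lemma_ineq_two (Q a : ℝ) (hQ : Q ≠ 0) (ha : 1 < a) :
    let b := Q ^ 2 + a ^ 2 - 1
    1 < (a * (b + Real.sqrt (b ^ 2 + 4 * Q ^ 2)) ^ 2 + 4 * a * Q ^ 2) /
      ((b + Real.sqrt (b ^ 2 + 4 * Q ^ 2) - 2 * Q ^ 2) ^ 2 + 4 * a ^ 2 * Q ^ 2) := by
  intro b
  have hQ2 : 0 < Q ^ 2 := by positivity
  have hb : 0 < b := by simp only [b]; nlinarith
  have hnn : 0 ≤ b ^ 2 + 4 * Q ^ 2 := by positivity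
  set s := Real.sqrt (b ^ 2 + 4 * Q ^ 2) with hsdef
  have hs : s ^ 2 = b ^ 2 + 4 * Q ^ 2 := Real.sq_sqrt hnn
  have hs0 : 0 ≤ s := Real.sqrt_nonneg _
  have hts : (a - 1) ^ 2 + Q ^ 2 < b + s := by simp only [b]; nlinarith
  have hD : 0 < (b + s - 2 * Q ^ 2) ^ 2 + 4 * a ^ 2 * Q ^ 2 := by
    nlinarith [sq_nonneg (b + s - 2 * Q ^ 2)]
  rw [one_lt_div hD]
  nlinarith [mul_pos (mul_pos hb (by linarith : (0:ℝ) < b + s)) (by linarith : (0:ℝ) < a - 1),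
    mul_pos hQ2 (by linarith : (0:ℝ) < b + s - (a - 1) ^ 2 - Q ^ 2), hs]
end

section
/- Let Q ∈ ℝ, Q ≠ 0, a > 0, and b = Q²+a²-1. Then the product ((a(b-√(b²+4Q²))²+4aQ²)/((b-√(b²+4Q²)-2Q²)²+4a²Q²)) · ((a(b+√(b²+4Q²))²+4aQ²)/((b+√(b²+4Q²)-2Q²)²+4a²Q²)) equals 1. -/
theorem lemma_product_one (Q a : ℝ) (hQ : Q ≠ 0) (ha : 0 < a) :
    let b := Q ^ 2 + a ^ 2 - 1
    ((a * (b - Real.sqrt (b ^ 2 + 4 * Q ^ 2)) ^ 2 + 4 * a * Q ^ 2) /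
        ((b - Real.sqrt (b ^ 2 + 4 * Q ^ 2) - 2 * Q ^ 2) ^ 2 + 4 * a ^ 2 * Q ^ 2)) *
      ((a * (b + Real.sqrt (b ^ 2 + 4 * Q ^ 2)) ^ 2 + 4 * a * Q ^ 2) /
        ((b + Real.sqrt (b ^ 2 + 4 * Q ^ 2) - 2 * Q ^ 2) ^ 2 + 4 * a ^ 2 * Q ^ 2)) = 1 := by
  intro b
  have hb : b = Q ^ 2 + a ^ 2 - 1 := rfl
  set s := Real.sqrt (b ^ 2 + 4 * Q ^ 2) with hsdef
  have hs : s ^ 2 = b ^ 2 + 4 * Q ^ 2 := Real.sq_sqrt (by positivity)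
  have hd1 : (b - s - 2 * Q ^ 2) ^ 2 + 4 * a ^ 2 * Q ^ 2 ≠ 0 := by positivity
  have hd2 : (b + s - 2 * Q ^ 2) ^ 2 + 4 * a ^ 2 * Q ^ 2 ≠ 0 := by positivity
  rw [div_mul_div_comm, div_eq_one_iff_eq (mul_ne_zero hd1 hd2)]
  linear_combination
    (a ^ 2 * (s ^ 2 + 3 * (b ^ 2 + 4 * Q ^ 2)) - s ^ 2 - (b ^ 2 + 4 * Q ^ 2)
      - 2 * ((b - 2 * Q ^ 2) ^ 2 + 4 * a ^ 2 * Q ^ 2) + 4 * (b - 2 * Q ^ 2) ^ 2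
      - 4 * a ^ 2 * b ^ 2) * hs - 32 * a ^ 2 * Q ^ 4 * hb
end

section
/- For real Q ≠ 0 and κ = |Q|/√(Q²+4), the solution U of the equation obtained from the system: ((κ²Ū+2κ+Ū)/(√2|1+κU|√(1-κ²)))·b = Q-i and (i√(1-κ²)Ū/(√2|1+κU|))·b = 1 (eliminating b), namely U = (-2κ² + Qi - κ²Qi)/(2κ), equals (Q/|Q|)·(-Q+2i)/√(Q²+4). -/
/-!
Writing `κ = a / s` with `a = |Q|` and `s = √(Q² + 4)`, only `a² = Q²` and `s² = Q² + 4` matter: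
then `1 - κ² = 4 / s²`, so the numerator is `2Q(-Q + 2i) / s²`, and dividing by `2κ = 2a / s`
leaves `(Q / a)(-Q + 2i) / s`.
-/

lemma unimodular_param_eq_of_sq_eq {K : Type*} [Field K] [NeZero (2 : K)] {a s Q : K}
    (ha : a ≠ 0) (hs : s ≠ 0) (ha2 : a ^ 2 = Q ^ 2) (hs2 : s ^ 2 = Q ^ 2 + 4) (z : K) :
    (-2 * (a / s) ^ 2 + Q * z - (a / s) ^ 2 * Q * z) / (2 * (a / s)) =
      Q / a * ((-Q + 2 * z) / s) := by
  field_simp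
  linear_combination (-2 - Q * z) * ha2 + Q * z * hs2

theorem U_formula_simplification (Q : ℝ) (hQ : Q ≠ 0) :
    let κ : ℝ := |Q| / Real.sqrt (Q ^ 2 + 4)
    (-2 * (κ : ℂ) ^ 2 + (Q : ℂ) * Complex.I - (κ : ℂ) ^ 2 * (Q : ℂ) * Complex.I) /
        (2 * (κ : ℂ))
      = ((Q / |Q| : ℝ) : ℂ) *
        ((-(Q : ℂ) + 2 * Complex.I) / ((Real.sqrt (Q ^ 2 + 4) : ℝ) : ℂ)) := by
  intro κ
  have ha : ((|Q| : ℝ) : ℂ) ≠ 0 := by exact_mod_cast abs_ne_zero.mpr hQ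
  have hs : ((Real.sqrt (Q ^ 2 + 4) : ℝ) : ℂ) ≠ 0 := by exact_mod_cast (by positivity)
  have ha2 : ((|Q| : ℝ) : ℂ) ^ 2 = (Q : ℂ) ^ 2 := by exact_mod_cast sq_abs Q
  have hs2 : ((Real.sqrt (Q ^ 2 + 4) : ℝ) : ℂ) ^ 2 = (Q : ℂ) ^ 2 + 4 := by
    exact_mod_cast Real.sq_sqrt (by positivity : (0 : ℝ) ≤ Q ^ 2 + 4)
  simpa only [κ, Complex.ofReal_div] using unimodular_param_eq_of_sq_eq ha hs ha2 hs2 Complex.I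
end

section
/- For real Q ≠ 0 and a > 0, the complex number κ = ((a-1-Qi)(Q-2ai))/((a-1)Q - (Q²+2a²+2a)i) satisfies |κ| < 1, and when a = 1, κ = (-Qi)(Q-2i)/(-(Q²+4)i) = Q(Q-2i)/(Q²+4), whose modulus is |Q|/√(Q²+4). -/
theorem universal_model_kappa (Q a : ℝ) (hQ : Q ≠ 0) (ha : 0 < a) :
    let κ : ℂ := (((a : ℂ) - 1 - (Q : ℂ) * Complex.I) * ((Q : ℂ) - 2 * (a : ℂ) * Complex.I)) /
      (((a : ℂ) - 1) * (Q : ℂ) - ((Q : ℂ) ^ 2 + 2 * (a : ℂ) ^ 2 + 2 * (a : ℂ)) * Complex.I)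
    ‖κ‖ < 1 ∧
      (a = 1 →
        κ = (Q : ℂ) * ((Q : ℂ) - 2 * Complex.I) / ((Q : ℂ) ^ 2 + 4) ∧
        ‖κ‖ = |Q| / Real.sqrt (Q ^ 2 + 4)) := by
  intro κ
  have hQ2 : 0 < Q ^ 2 := by positivity
  have hden : (((a : ℂ) - 1) * (Q : ℂ) - ((Q : ℂ) ^ 2 + 2 * (a : ℂ) ^ 2 + 2 * (a : ℂ)) * Complex.I) ≠ 0 := by
    intro h
    have := congrArg Complex.im h
    simp [Complex.ext_iff, Complex.add_im, Complex.mul_im, pow_two] at this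
    nlinarith
  have hdenpos : 0 < ‖(((a : ℂ) - 1) * (Q : ℂ) - ((Q : ℂ) ^ 2 + 2 * (a : ℂ) ^ 2 + 2 * (a : ℂ)) * Complex.I)‖ :=
    norm_pos_iff.mpr hden
  constructor
  · rw [show κ = _ / _ from rfl, norm_div, div_lt_one hdenpos]
    have hsq : ‖(((a : ℂ) - 1 - (Q : ℂ) * Complex.I) * ((Q : ℂ) - 2 * (a : ℂ) * Complex.I))‖ ^ 2
        < ‖(((a : ℂ) - 1) * (Q : ℂ) - ((Q : ℂ) ^ 2 + 2 * (a : ℂ) ^ 2 + 2 * (a : ℂ)) * Complex.I)‖ ^ 2 := by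
      rw [Complex.sq_norm, Complex.sq_norm]
      simp [Complex.normSq_apply, pow_two]
      nlinarith [sq_nonneg Q, sq_nonneg a, mul_pos ha hQ2, mul_pos (mul_pos ha ha) ha]
    exact lt_of_pow_lt_pow_left₀ 2 hdenpos.le hsq
  · intro h1
    subst h1
    have h4 : ((Q : ℂ) ^ 2 + 4) ≠ 0 := by
      intro h
      have := congrArg Complex.re h
      simp [pow_two] at this
      nlinarith
    have hκ : κ = (Q : ℂ) * ((Q : ℂ) - 2 * Complex.I) / ((Q : ℂ) ^ 2 + 4) := by
      show _ / _ = _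
      rw [div_eq_div_iff (by simpa using hden) h4]
      push_cast
      ring_nf
    refine ⟨hκ, ?_⟩
    rw [hκ, norm_div, norm_mul]
    have h1 : ‖((Q : ℂ) - 2 * Complex.I)‖ = Real.sqrt (Q ^ 2 + 4) := by
      rw [Complex.norm_def]
      congr 1
      simp [Complex.normSq_apply]
      ring
    have h2 : ‖((Q : ℂ) ^ 2 + 4)‖ = Q ^ 2 + 4 := by
      have : ((Q : ℂ) ^ 2 + 4) = ((Q ^ 2 + 4 : ℝ) : ℂ) := by push_cast; ring
      rw [this, Complex.norm_real, Real.norm_eq_abs, abs_of_pos (by positivity)]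
    rw [h1, h2, Complex.norm_real, Real.norm_eq_abs]
    rw [div_eq_div_iff (by positivity) (Real.sqrt_pos.mpr (by positivity)).ne',
      mul_assoc, Real.mul_self_sqrt (by positivity : (0:ℝ) ≤ Q ^ 2 + 4)]
end
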